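/- arXiv:2501.17803 — 2 statements merged into one kernel-verified Lean document; each statement's English description precedes it below -/
import Mathlib

section
/- Let F : ℝ × ℝ² → ℝ² be continuous in the state variable, let R ⊂ ℝ² be a compact convex set, and let X : [0, T] → ℝ² be absolutely continuous with X'(t) = F(t, X(t)) a.e., X(0) ∈ interior(R). Suppose that for every boundary point p ∈ ∂R and every outward normal n⃗ at p there is a neighborhood V of p and a constant c < 0 with F(t, z) · n⃗ ≤ c for all z ∈ V and all t ∈ [0,T]. Then X(t) ∈ R for all t ∈ [0, T]. -/
open scoped RealInnerProductSpace

theorem positive_invariance_of_compact_convex (T : ℝ) (hT : 0 < T)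
    (F : ℝ → EuclideanSpace ℝ (Fin 2) → EuclideanSpace ℝ (Fin 2))
    (R : Set (EuclideanSpace ℝ (Fin 2)))
    (hRcomp : IsCompact R) (hRconv : Convex ℝ R)
    (hFcont : ∀ t : ℝ, Continuous (F t))
    (X : ℝ → EuclideanSpace ℝ (Fin 2))
    (hXint : ∀ t ∈ Set.Icc (0 : ℝ) T,
      IntervalIntegrable (fun s => F s (X s)) MeasureTheory.volume 0 t)
    (hXode : ∀ t ∈ Set.Icc (0 : ℝ) T, X t = X 0 + ∫ s in (0 : ℝ)..t, F s (X s))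
    (hX0 : X 0 ∈ interior R)
    (hinward : ∀ p ∈ frontier R, ∀ n : EuclideanSpace ℝ (Fin 2), n ≠ 0 →
      (∀ z ∈ R, ⟪n, z - p⟫ ≤ 0) →
      ∃ V ∈ nhds p, ∃ c : ℝ, c < 0 ∧
        ∀ z ∈ V, ∀ t ∈ Set.Icc (0 : ℝ) T, ⟪F t z, n⟫ ≤ c) :
    ∀ t ∈ Set.Icc (0 : ℝ) T, X t ∈ R := by
  by_contra hbad
  push_neg at hbad
  obtain ⟨t₀, ht₀, hXt₀⟩ := hbad
  set f : ℝ → EuclideanSpace ℝ (Fin 2) := fun s => F s (X s) with hf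
  -- continuity of X on [0, T]
  have hXcont : ContinuousOn X (Set.Icc 0 T) := by
    have hint : IntervalIntegrable f MeasureTheory.volume 0 T :=
      hXint T ⟨le_of_lt hT, le_refl T⟩
    have hprim : ContinuousOn (fun t => ∫ s in (0 : ℝ)..t, f s) (Set.uIcc (0 : ℝ) T) :=
      intervalIntegral.continuousOn_primitive_interval' hint Set.left_mem_uIcc
    rw [Set.uIcc_of_le hT.le] at hprim
    exact (continuousOn_const.add hprim).congr (fun t ht => hXode t ht)
  -- the first exit time
  set S : Set ℝ := {t | t ∈ Set.Icc (0 : ℝ) t₀ ∧ X t ∉ R} with hS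
  have hSne : S.Nonempty := ⟨t₀, ⟨ht₀.1, le_refl t₀⟩, hXt₀⟩
  have hSbdd : BddBelow S := ⟨0, fun x hx => hx.1.1⟩
  set t₁ : ℝ := sInf S with ht₁def
  have ht₁0 : 0 ≤ t₁ := le_csInf hSne (fun x hx => hx.1.1)
  have ht₁t₀ : t₁ ≤ t₀ := csInf_le hSbdd ⟨⟨ht₀.1, le_refl t₀⟩, hXt₀⟩
  have ht₁Icc : t₁ ∈ Set.Icc (0 : ℝ) T := ⟨ht₁0, ht₁t₀.trans ht₀.2⟩
  have hbefore : ∀ t, 0 ≤ t → t < t₁ → X t ∈ R := by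
    intro t ht0 htlt
    by_contra hnot
    exact absurd (csInf_le hSbdd ⟨⟨ht0, htlt.le.trans ht₁t₀⟩, hnot⟩) (not_le.2 htlt)
  -- continuity at t₁
  have key : ∀ U ∈ nhds (X t₁), ∃ δ > (0 : ℝ),
      ∀ t ∈ Set.Icc (0 : ℝ) T, |t - t₁| < δ → X t ∈ U := by
    intro U hU
    have h1 : X ⁻¹' U ∈ nhdsWithin t₁ (Set.Icc 0 T) := hXcont t₁ ht₁Icc hU
    rcases Metric.mem_nhdsWithin_iff.1 h1 with ⟨δ, hδ, hsub⟩
    refine ⟨δ, hδ, fun t htI htd => hsub ⟨?_, htI⟩⟩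
    rw [Metric.mem_ball, Real.dist_eq]
    exact htd
  -- elements of S arbitrarily close above t₁
  have happrox : ∀ δ > (0 : ℝ), ∃ s ∈ S, |s - t₁| < δ := by
    intro δ hδ
    obtain ⟨s, hsS, hslt⟩ := exists_lt_of_csInf_lt hSne (lt_add_of_pos_right t₁ hδ)
    refine ⟨s, hsS, ?_⟩
    rw [abs_lt]
    constructor
    · have := csInf_le hSbdd hsS
      linarith
    · linarith
  -- X t₁ not in the interior of R
  have hnotint : X t₁ ∉ interior R := by
    intro hmem
    obtain ⟨δ, hδ, hball⟩ := key (interior R) (isOpen_interior.mem_nhds hmem)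
    obtain ⟨s, hsS, hsd⟩ := happrox δ hδ
    exact hsS.2 (interior_subset (hball s ⟨hsS.1.1, hsS.1.2.trans ht₀.2⟩ hsd))
  -- X t₁ ∈ R
  have ht₁pos : 0 < t₁ := by
    rcases lt_or_eq_of_le ht₁0 with h | h
    · exact h
    · exact absurd (h ▸ hX0) hnotint
  have hXt₁R : X t₁ ∈ R := by
    by_contra hnot
    obtain ⟨δ, hδ, hball⟩ := key Rᶜ ((hRcomp.isClosed.isOpen_compl).mem_nhds hnot)
    set t := max (t₁ - δ / 2) 0 with htdef
    have htlt : t < t₁ := max_lt (by linarith) ht₁pos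
    have ht0 : (0 : ℝ) ≤ t := le_max_right _ _
    have htd : |t - t₁| < δ := by
      rw [abs_lt]
      constructor
      · have : t₁ - δ / 2 ≤ t := le_max_left _ _
        linarith
      · linarith
    have : X t ∈ Rᶜ := hball t ⟨ht0, htlt.le.trans ht₁Icc.2⟩ htd
    exact this (hbefore t ht0 htlt)
  have hfrontier : X t₁ ∈ frontier R := by
    rw [hRcomp.isClosed.frontier_eq]
    exact ⟨hXt₁R, hnotint⟩
  -- supporting hyperplane at p = X t₁
  obtain ⟨fℓ, hfℓ⟩ := geometric_hahn_banach_open_point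
    (hRconv.interior) isOpen_interior hnotint
  have hx0lt : fℓ (X 0) < fℓ (X t₁) := hfℓ (X 0) hX0
  have hle : ∀ z ∈ R, fℓ z ≤ fℓ (X t₁) := by
    intro z hz
    by_contra hgt
    push_neg at hgt
    have ha : fℓ (X 0) < fℓ (X t₁) := hx0lt
    set b := fℓ z
    set q := fℓ (X t₁)
    set a := fℓ (X 0)
    have hba : q - a < b - a := by dsimp only [b, q, a]; linarith
    have hbapos : (0 : ℝ) < b - a := by dsimp only [b, a]; linarith
    set θ : ℝ := (b - q) / (b - a) with hθdef
    have hθpos : 0 < θ := div_pos (by dsimp only [b, q]; linarith) hbapos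
    have hθlt : θ < 1 := (div_lt_one hbapos).2 (by dsimp only [b, q, a]; linarith)
    have hmem : θ • (X 0) + (1 - θ) • z ∈ interior R :=
      hRconv.combo_interior_self_mem_interior hX0 hz hθpos (by linarith) (by ring)
    have := hfℓ _ hmem
    rw [map_add, map_smul, map_smul] at this
    simp only [smul_eq_mul] at this
    have hθval : θ * (b - a) = b - q := by
      rw [hθdef]; field_simp
    dsimp only [a, b, q] at hθval this
    nlinarith [hθval]
  -- the outward normal vector
  set n : EuclideanSpace ℝ (Fin 2) :=
    (InnerProductSpace.toDual ℝ (EuclideanSpace ℝ (Fin 2))).symm fℓ with hndef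
  have hninner : ∀ z, ⟪n, z⟫ = fℓ z := fun z => InnerProductSpace.toDual_symm_apply
  have hn0 : n ≠ 0 := by
    intro h
    have h1 := hninner (X 0)
    have h2 := hninner (X t₁)
    rw [h] at h1 h2
    simp only [inner_zero_left] at h1 h2
    rw [← h1, ← h2] at hx0lt
    exact lt_irrefl _ hx0lt
  have hnormal : ∀ z ∈ R, ⟪n, z - X t₁⟫ ≤ 0 := by
    intro z hz
    rw [inner_sub_right, hninner, hninner]
    linarith [hle z hz]
  obtain ⟨V, hV, c, hc, hbd⟩ := hinward (X t₁) hfrontier n hn0 hnormal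
  obtain ⟨δ, hδ, hball⟩ := key V hV
  -- choose t slightly before t₁
  set t : ℝ := max (t₁ - δ / 2) 0 with htdef
  have htlt : t < t₁ := max_lt (by linarith) ht₁pos
  have ht0 : (0 : ℝ) ≤ t := le_max_right _ _
  have htlb : t₁ - δ / 2 ≤ t := le_max_left _ _
  have htIcc : t ∈ Set.Icc (0 : ℝ) T := ⟨ht0, htlt.le.trans ht₁Icc.2⟩
  have hXtR : X t ∈ R := hbefore t ht0 htlt
  have hinV : ∀ τ ∈ Set.Icc t t₁, X τ ∈ V := by
    intro τ hτ
    have hτIcc : τ ∈ Set.Icc (0 : ℝ) T := ⟨ht0.trans hτ.1, hτ.2.trans ht₁Icc.2⟩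
    refine hball τ hτIcc ?_
    rw [abs_lt]
    constructor
    · have := hτ.1
      linarith
    · have := hτ.2
      linarith
  -- integral identity
  have hint1 : IntervalIntegrable f MeasureTheory.volume 0 t₁ := hXint t₁ ht₁Icc
  have hint2 : IntervalIntegrable f MeasureTheory.volume 0 t := hXint t htIcc
  have hft : IntervalIntegrable f MeasureTheory.volume t t₁ := by
    refine hint1.mono_set ?_
    rw [Set.uIcc_of_le htlt.le, Set.uIcc_of_le ht₁0]
    exact Set.Icc_subset_Icc ht0 (le_refl t₁)
  have hXdiff : X t₁ - X t = ∫ s in t..t₁, f s := by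
    rw [hXode t₁ ht₁Icc, hXode t htIcc,
      ← intervalIntegral.integral_interval_sub_left hint1 hint2]
    abel
  have hinner_int : ⟪n, X t₁ - X t⟫ = ∫ s in t..t₁, ⟪n, f s⟫ := by
    rw [hXdiff]
    exact ((innerSL ℝ n).intervalIntegral_comp_comm hft).symm
  have hip : IntervalIntegrable (fun s => ⟪n, f s⟫) MeasureTheory.volume t t₁ :=
    ⟨(innerSL ℝ n).integrable_comp hft.1, (innerSL ℝ n).integrable_comp hft.2⟩
  have hconst : IntervalIntegrable (fun _ : ℝ => c) MeasureTheory.volume t t₁ :=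
    intervalIntegrable_const
  have hmono : (∫ s in t..t₁, ⟪n, f s⟫) ≤ ∫ s in t..t₁, c := by
    refine intervalIntegral.integral_mono_on htlt.le hip hconst ?_
    intro τ hτ
    have hτIcc : τ ∈ Set.Icc (0 : ℝ) T := ⟨ht0.trans hτ.1, hτ.2.trans ht₁Icc.2⟩
    have := hbd (X τ) (hinV τ hτ) τ hτIcc
    rwa [real_inner_comm] at this
  have hcint : (∫ _ in t..t₁, c) = c * (t₁ - t) := by
    rw [intervalIntegral.integral_const, smul_eq_mul, mul_comm]
  have hneg : ⟪n, X t₁ - X t⟫ < 0 := by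
    rw [hinner_int]
    calc (∫ s in t..t₁, ⟪n, f s⟫) ≤ c * (t₁ - t) := by rw [← hcint]; exact hmono
    _ < 0 := mul_neg_of_neg_of_pos hc (by linarith)
  have hpos : (0 : ℝ) ≤ ⟪n, X t₁ - X t⟫ := by
    have := hnormal (X t) hXtR
    rw [inner_sub_right] at this ⊢
    linarith
  linarith
end

section
/- Cauchy mean value exit-side criterion: let F₁, F₂ : R → ℝ be continuous on the rectangle R = [a,b]×[c,d] with F₁ > 0 and F₂ > 0 on R, and suppose sup_{R} F₂/F₁ < (d − c)/(b − a). If Γ = (v, w) : [0,T] → R solves Γ' = (F₁(Γ), F₂(Γ)) with Γ(0) ∈ [a,b] × {c} and Γ(t) ∈ R on [0,T], then w(T) − w(0) < d − c; in particular the trajectory cannot reach the top side [a,b] × {d} before reaching the right side {b} × [c,d]. -/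
open Set

theorem cauchy_mvt_exit_side_criterion
    (a b c d T : ℝ) (hab : a < b) (hcd : c < d) (hT : 0 ≤ T)
    (F₁ F₂ : ℝ × ℝ → ℝ)
    (hF₁cont : ContinuousOn F₁ (Icc a b ×ˢ Icc c d))
    (hF₂cont : ContinuousOn F₂ (Icc a b ×ˢ Icc c d))
    (hF₁pos : ∀ p ∈ Icc a b ×ˢ Icc c d, 0 < F₁ p)
    (hF₂pos : ∀ p ∈ Icc a b ×ˢ Icc c d, 0 < F₂ p)
    (hratio : sSup ((fun p => F₂ p / F₁ p) '' (Icc a b ×ˢ Icc c d)) < (d - c) / (b - a))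
    (v w : ℝ → ℝ)
    (hv : ∀ t ∈ Icc (0 : ℝ) T, HasDerivAt v (F₁ (v t, w t)) t)
    (hw : ∀ t ∈ Icc (0 : ℝ) T, HasDerivAt w (F₂ (v t, w t)) t)
    (hin : ∀ t ∈ Icc (0 : ℝ) T, (v t, w t) ∈ Icc a b ×ˢ Icc c d)
    (h0 : v 0 ∈ Icc a b ∧ w 0 = c) :
    w T - w 0 < d - c := by
  set R := Icc a b ×ˢ Icc c d with hR
  set S := (fun p => F₂ p / F₁ p) '' R with hS
  have hRc : IsCompact R := isCompact_Icc.prod isCompact_Icc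
  have hcont : ContinuousOn (fun p => F₂ p / F₁ p) R :=
    hF₂cont.div hF₁cont (fun p hp => (hF₁pos p hp).ne')
  have hSbdd : BddAbove S := (hRc.image_of_continuousOn hcont).bddAbove
  set M := sSup S with hM
  have hmemR : ((a, c) : ℝ × ℝ) ∈ R := by
    constructor <;> simp [hab.le, hcd.le]
  have hMpos : 0 < M :=
    lt_of_lt_of_le (div_pos (hF₂pos _ hmemR) (hF₁pos _ hmemR))
      (le_csSup hSbdd ⟨_, hmemR, rfl⟩)
  have key : ∀ t ∈ Icc (0:ℝ) T, F₂ (v t, w t) ≤ M * F₁ (v t, w t) := by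
    intro t ht
    have hp := hin t ht
    have h1 := hF₁pos _ hp
    have hle : F₂ (v t, w t) / F₁ (v t, w t) ≤ M := le_csSup hSbdd ⟨_, hp, rfl⟩
    calc F₂ (v t, w t) = F₂ (v t, w t) / F₁ (v t, w t) * F₁ (v t, w t) := by
          field_simp
      _ ≤ M * F₁ (v t, w t) := mul_le_mul_of_nonneg_right hle h1.le
  set g := fun t => M * v t - w t with hg
  have hgd : ∀ t ∈ Icc (0:ℝ) T, HasDerivAt g (M * F₁ (v t, w t) - F₂ (v t, w t)) t :=
    fun t ht => ((hv t ht).const_mul M).sub (hw t ht)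
  have hmono : MonotoneOn g (Icc 0 T) := by
    apply monotoneOn_of_deriv_nonneg (convex_Icc 0 T)
    · exact fun t ht => ((hgd t ht).continuousAt).continuousWithinAt
    · intro t ht
      rw [interior_Icc] at ht
      exact ((hgd t (Ioo_subset_Icc_self ht)).differentiableAt).differentiableWithinAt
    · intro t ht
      rw [interior_Icc] at ht
      have ht' : t ∈ Icc (0:ℝ) T := Ioo_subset_Icc_self ht
      rw [(hgd t ht').deriv]
      linarith [key t ht']
  have hgT : g 0 ≤ g T := hmono (left_mem_Icc.mpr hT) (right_mem_Icc.mpr hT) hT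
  have hv0 : v 0 ∈ Icc a b := h0.1
  have hvT : v T ∈ Icc a b := (hin T (right_mem_Icc.mpr hT)).1
  have h1 : w T - w 0 ≤ M * (v T - v 0) := by
    simp only [hg] at hgT; nlinarith
  have h2 : M * (v T - v 0) ≤ M * (b - a) := by
    apply mul_le_mul_of_nonneg_left _ hMpos.le
    have := hv0.1; have := hvT.2; linarith
  have h3 : M * (b - a) < d - c := by
    have hba : (0:ℝ) < b - a := by linarith
    have := mul_lt_mul_of_pos_right hratio hba
    rwa [div_mul_cancel₀ _ hba.ne'] at this
  linarith
end
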